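/- An instance (N_in, T_in) of Tree Containment is a Yes-instance if and only if there exists a (V(D_in), Y)-containment structure (D(N,T), φ, ι) with ι⁻¹(Y)=∅. -/

import Mathlib

namespace TreeContainment

open scoped Classical

variable {V Λ : Type}

/-- A directed graph with an explicit vertex set. -/
structure DGraph (V : Type) where
  verts : Set V
  Arc : V → V → Prop
  arc_left : ∀ ⦃u v : V⦄, Arc u v → u ∈ verts
  arc_right : ∀ ⦃u v : V⦄, Arc u v → v ∈ verts

noncomputable def DGraph.inDeg (G : DGraph V) (v : V) : ℕ := {u : V | G.Arc u v}.ncard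
noncomputable def DGraph.outDeg (G : DGraph V) (v : V) : ℕ := {u : V | G.Arc v u}.ncard
def DGraph.Acyclic (G : DGraph V) : Prop := ∀ v : V, ¬ Relation.TransGen G.Arc v v

def IsSubgraph (H G : DGraph V) : Prop :=
  H.verts ⊆ G.verts ∧ ∀ ⦃u v⦄, H.Arc u v → G.Arc u v

/-- The consecutive pairs (arcs) of a list of vertices. -/
def listArcs (p : List V) : List (V × V) := p.zip p.tail

def IsArcOf (p : List V) (a b : V) : Prop := (a, b) ∈ listArcs p

lemma isArcOf_mem_left {p : List V} {a b : V} (h : IsArcOf p a b) : a ∈ p :=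
  (List.of_mem_zip h).1

lemma isArcOf_mem_right {p : List V} {a b : V} (h : IsArcOf p a b) : b ∈ p :=
  List.mem_of_mem_tail (List.of_mem_zip h).2

/-- `p` is a directed path from `u` to `v` with respect to the arc relation `A`. -/
def DipathFrom (A : V → V → Prop) (u v : V) (p : List V) : Prop :=
  p.Chain' A ∧ p.Nodup ∧ p.head? = some u ∧ p.getLast? = some v

/-- Rooted binary phylogenetic network. -/
def IsBinPhyloNet (N : DGraph V) : Prop :=
  N.Acyclic ∧ N.verts.Finite ∧ N.verts.Nonempty ∧
  (∃! ρ, ρ ∈ N.verts ∧ N.inDeg ρ = 0) ∧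
  ∀ v ∈ N.verts,
    (N.inDeg v = 0 ∧ N.outDeg v = 2) ∨ (N.inDeg v = 1 ∧ N.outDeg v = 0) ∨
    (N.inDeg v = 2 ∧ N.outDeg v = 1) ∨ (N.inDeg v = 1 ∧ N.outDeg v = 2)

/-- Rooted binary phylogenetic tree: a binary phylogenetic network without reticulations. -/
def IsBinPhyloTree (T : DGraph V) : Prop :=
  IsBinPhyloNet T ∧ ∀ v ∈ T.verts, T.inDeg v ≤ 1

def leaves (G : DGraph V) : Set V :=
  {v : V | v ∈ G.verts ∧ G.inDeg v = 1 ∧ G.outDeg v = 0}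

/-- Equally labelled leaves of `N` and `T` are identified: the common vertices of the two
graphs are exactly the leaves of each side. -/
def SharedLeaves (N T : DGraph V) : Prop :=
  N.verts ∩ T.verts = leaves N ∧ N.verts ∩ T.verts = leaves T

/-- A witness that `H` is a subdivision of the tree `Tg`. -/
structure SubdivWitness (H Tg : DGraph V) where
  vmap : V → V
  pmap : V → V → List V
  vmap_mem : ∀ u ∈ Tg.verts, vmap u ∈ H.verts
  inj : ∀ u ∈ Tg.verts, ∀ v ∈ Tg.verts, vmap u = vmap v → u = v
  path_spec : ∀ ⦃u v⦄, Tg.Arc u v → DipathFrom H.Arc (vmap u) (vmap v) (pmap u v)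
  path_len : ∀ ⦃u v⦄, Tg.Arc u v → 2 ≤ (pmap u v).length
  internal_new : ∀ ⦃u v⦄, Tg.Arc u v → ∀ z ∈ pmap u v, z ≠ vmap u → z ≠ vmap v →
    ∀ w ∈ Tg.verts, vmap w ≠ z
  internal_disjoint : ∀ ⦃u v u' v'⦄, Tg.Arc u v → Tg.Arc u' v' → (u, v) ≠ (u', v') →
    ∀ z, z ∈ pmap u v → z ∈ pmap u' v' →
      (z = vmap u ∨ z = vmap v) ∧ (z = vmap u' ∨ z = vmap v')
  arcs_cover : ∀ a b, H.Arc a b → ∃ u v, Tg.Arc u v ∧ IsArcOf (pmap u v) a b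
  verts_cover : ∀ z ∈ H.verts, (∃ u ∈ Tg.verts, vmap u = z) ∨ ∃ u v, Tg.Arc u v ∧ z ∈ pmap u v

/-- `N` displays `T`: some subgraph of `N` is a subdivision of `T`, respecting
the (identified) leaf labels. -/
def Displays (N T : DGraph V) : Prop :=
  ∃ H : DGraph V, IsSubgraph H N ∧
    ∃ w : SubdivWitness H T, ∀ u ∈ T.verts ∩ N.verts, w.vmap u = u

/-- An embedding function of the tree `Tg` into the network `Ng`
(an embedding function on the display graph `D(Ng,Tg)`). -/
structure EmbOn (Tg Ng : DGraph V) where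
  vmap : V → V
  pmap : V → V → List V
  vmap_mem : ∀ u ∈ Tg.verts, vmap u ∈ Ng.verts
  path_spec : ∀ ⦃u v⦄, Tg.Arc u v → DipathFrom Ng.Arc (vmap u) (vmap v) (pmap u v)
  inj : ∀ u ∈ Tg.verts, ∀ v ∈ Tg.verts, vmap u = vmap v → u = v
  fixes : ∀ u ∈ Tg.verts ∩ Ng.verts, vmap u = u
  arc_disjoint : ∀ ⦃u v u' v'⦄, Tg.Arc u v → Tg.Arc u' v' → (u, v) ≠ (u', v') →
    ∀ e, e ∈ listArcs (pmap u v) → e ∉ listArcs (pmap u' v')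
  share : ∀ ⦃u v u' v'⦄, Tg.Arc u v → Tg.Arc u' v' → (u, v) ≠ (u', v') →
    ∀ z, z ∈ pmap u v → z ∈ pmap u' v' →
      ∃ w, (w = u ∨ w = v) ∧ (w = u' ∨ w = v') ∧ vmap w = z

/-- The subgraph of the network consisting of all arcs lying on some embedding path. -/
def usedSubgraph (Tg Ng : DGraph V) (φ : EmbOn Tg Ng) : DGraph V where
  verts := {z : V | ∃ u v, Tg.Arc u v ∧ z ∈ φ.pmap u v}
  Arc a b := ∃ u v, Tg.Arc u v ∧ IsArcOf (φ.pmap u v) a b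
  arc_left := by
    rintro a b ⟨u, v, huv, harc⟩
    exact ⟨u, v, huv, isArcOf_mem_left harc⟩
  arc_right := by
    rintro a b ⟨u, v, huv, harc⟩
    exact ⟨u, v, huv, isArcOf_mem_right harc⟩

/-- A display graph: a DAG whose vertex set is covered by a tree side `VT`
and a network side `VN`, satisfying the degree conditions of the paper. -/
structure DispGraph (V : Type) extends DGraph V where
  VT : Set V
  VN : Set V
  union_eq : VT ∪ VN = verts
  finite : verts.Finite
  acyclic : ∀ v : V, ¬ Relation.TransGen Arc v v
  tree_indeg : ∀ v : V, {u : V | Arc u v ∧ u ∈ VT ∧ v ∈ VT}.ncard ≤ 1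
  indeg_le : ∀ v : V, {u : V | Arc u v}.ncard ≤ 2
  outdeg_le : ∀ v : V, {u : V | Arc v u}.ncard ≤ 2
  totdeg_le : ∀ v : V, {u : V | Arc u v}.ncard + {u : V | Arc v u}.ncard ≤ 3
  shared_out : ∀ v ∈ VT ∩ VN, ∀ u, ¬ Arc v u
  shared_in_T : ∀ v ∈ VT ∩ VN, {u : V | Arc u v ∧ u ∈ VT}.ncard ≤ 1
  shared_in_N : ∀ v ∈ VT ∩ VN, {u : V | Arc u v ∧ u ∈ VN}.ncard ≤ 1

/-- The tree side of a display graph. -/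
def DispGraph.treeSide (G : DispGraph V) : DGraph V where
  verts := G.VT
  Arc u v := G.Arc u v ∧ u ∈ G.VT ∧ v ∈ G.VT
  arc_left := by intro u v h; exact h.2.1
  arc_right := by intro u v h; exact h.2.2

/-- The network side of a display graph. -/
def DispGraph.netSide (G : DispGraph V) : DGraph V where
  verts := G.VN
  Arc u v := G.Arc u v ∧ u ∈ G.VN ∧ v ∈ G.VN
  arc_left := by intro u v h; exact h.2.1
  arc_right := by intro u v h; exact h.2.2

def DispGraph.TArc (G : DispGraph V) (u v : V) : Prop := G.treeSide.Arc u v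
def DispGraph.NArc (G : DispGraph V) (u v : V) : Prop := G.netSide.Arc u v
noncomputable def DispGraph.inDeg (G : DispGraph V) : V → ℕ := G.toDGraph.inDeg
noncomputable def DispGraph.outDeg (G : DispGraph V) : V → ℕ := G.toDGraph.outDeg

/-- An embedding function on a display graph: an embedding of its tree side into
its network side. -/
abbrev EmbFun (G : DispGraph V) := EmbOn G.treeSide G.netSide

/-- The data of a containment structure: a display graph, an embedding function on it,
and an isolabelling into vertices of the ambient display graph or labels from `Λ`. -/
structure CStruct (V Λ : Type) where
  G : DispGraph V
  emb : EmbFun G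
  ι : V → V ⊕ Λ

/-- Relabelling a containment structure by a restriction function. -/
def CStruct.relabel (g : V ⊕ Λ → V ⊕ Λ) (χ : CStruct V Λ) : CStruct V Λ :=
  ⟨χ.G, χ.emb, fun v => g (χ.ι v)⟩

/-- `ι` is an `(S,Y)`-isolabelling on the display graph of `χ`, relative to the
ambient display graph `Din`. -/
def IsIsolabelling (Din : DispGraph V) (S : Set V) (Ys : Set Λ) (χ : CStruct V Λ) : Prop :=
  (∀ u ∈ χ.G.verts, (∃ s ∈ S, χ.ι u = Sum.inl s) ∨ (∃ y ∈ Ys, χ.ι u = Sum.inr y)) ∧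
  (∀ s ∈ S, ∃ u ∈ χ.G.verts, χ.ι u = Sum.inl s) ∧
  (∀ u ∈ χ.G.verts, ∀ s ∈ S, χ.ι u = Sum.inl s →
    (s ∈ Din.VN → u ∈ χ.G.VN) ∧ (s ∈ Din.VT → u ∈ χ.G.VT)) ∧
  (∀ u ∈ χ.G.verts, ∀ v ∈ χ.G.verts, ∀ s ∈ S, χ.ι u = Sum.inl s → χ.ι v = Sum.inl s → u = v) ∧
  (∀ u ∈ χ.G.verts, ∀ v ∈ χ.G.verts, ∀ s ∈ S, ∀ t ∈ S,
    χ.ι u = Sum.inl s → χ.ι v = Sum.inl t → (χ.G.Arc u v ↔ Din.Arc s t))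

/-- `χ` is an `(S,Y)`-containment structure relative to the ambient display graph `Din`. -/
def IsCS (Din : DispGraph V) (S : Set V) (Ys : Set Λ) (χ : CStruct V Λ) : Prop :=
  IsIsolabelling Din S Ys χ ∧
  (∀ u ∈ χ.G.verts, ∀ s ∈ S, χ.ι u = Sum.inl s →
    χ.G.inDeg u = Din.inDeg s ∧ χ.G.outDeg u = Din.outDeg s) ∧
  (∀ u ∈ χ.G.VT, χ.ι u ≠ χ.ι (χ.emb.vmap u) → χ.G.outDeg u = 2)

/-- A tree arc `uv` is `y`-redundant. -/
def TArcRedundant (χ : CStruct V Λ) (y : Λ) (u v : V) : Prop :=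
  χ.G.TArc u v ∧ χ.ι u = Sum.inr y ∧ χ.ι v = Sum.inr y ∧
    ∀ z ∈ χ.emb.pmap u v, χ.ι z = Sum.inr y

/-- A network arc `ab` is `y`-redundant. -/
def NArcRedundant (χ : CStruct V Λ) (y : Λ) (a b : V) : Prop :=
  χ.G.NArc a b ∧ χ.ι a = Sum.inr y ∧ χ.ι b = Sum.inr y ∧
    ∀ u v, χ.G.TArc u v → IsArcOf (χ.emb.pmap u v) a b → TArcRedundant χ y u v

def ArcRedundant (χ : CStruct V Λ) (y : Λ) (u v : V) : Prop :=
  TArcRedundant χ y u v ∨ NArcRedundant χ y u v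

/-- A tree vertex `v` is `y`-redundant. -/
def TVertRedundant (χ : CStruct V Λ) (y : Λ) (v : V) : Prop :=
  v ∈ χ.G.VT ∧ χ.ι v = Sum.inr y ∧ χ.ι (χ.emb.vmap v) = Sum.inr y ∧
  (∀ u, χ.G.Arc u v → ArcRedundant χ y u v) ∧
  (∀ u, χ.G.Arc v u → ArcRedundant χ y v u) ∧
  (∀ u, χ.G.Arc u (χ.emb.vmap v) → ArcRedundant χ y u (χ.emb.vmap v)) ∧
  (∀ u, χ.G.Arc (χ.emb.vmap v) u → ArcRedundant χ y (χ.emb.vmap v) u)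

/-- A network vertex `v` is `y`-redundant. -/
def NVertRedundant (χ : CStruct V Λ) (y : Λ) (v : V) : Prop :=
  v ∈ χ.G.VN ∧ χ.ι v = Sum.inr y ∧
  (∀ u, χ.G.Arc u v → ArcRedundant χ y u v) ∧
  (∀ u, χ.G.Arc v u → ArcRedundant χ y v u) ∧
  (∀ w ∈ χ.G.VT, χ.emb.vmap w = v → TVertRedundant χ y w)

def VertRedundant (χ : CStruct V Λ) (y : Λ) (v : V) : Prop :=
  TVertRedundant χ y v ∨ NVertRedundant χ y v

/-- `χ'` is the `g`-restriction of `χ`: relabel by `g` and delete all redundant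
arcs and vertices; the embedding and isolabelling are restricted accordingly. -/
def IsRestrictionOf (g : V ⊕ Λ → V ⊕ Λ) (χ' χ : CStruct V Λ) : Prop :=
  χ'.G.verts = χ.G.verts \ {v : V | ∃ y, VertRedundant (χ.relabel g) y v} ∧
  (∀ u v, χ'.G.Arc u v ↔ (χ.G.Arc u v ∧ ¬ ∃ y, ArcRedundant (χ.relabel g) y u v)) ∧
  χ'.G.VT = χ.G.VT ∩ χ'.G.verts ∧
  χ'.G.VN = χ.G.VN ∩ χ'.G.verts ∧
  (∀ v ∈ χ'.G.VT, χ'.emb.vmap v = χ.emb.vmap v) ∧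
  (∀ u v, χ'.G.TArc u v → χ'.emb.pmap u v = χ.emb.pmap u v) ∧
  (∀ v ∈ χ'.G.verts, χ'.ι v = g (χ.ι v))

/-- `g : S ∪ Y → S' ∪ Y` is a restriction function: identity on `S'`, mapping the rest
of `S` into `Y`, and mapping `Y` into `Y`. -/
def IsRestrictionFun (S S' : Set V) (Ys : Set Λ) (g : V ⊕ Λ → V ⊕ Λ) : Prop :=
  (∀ v ∈ S', g (Sum.inl v) = Sum.inl v) ∧
  (∀ v ∈ S, v ∉ S' → ∃ y ∈ Ys, g (Sum.inl v) = Sum.inr y) ∧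
  (∀ y ∈ Ys, ∃ y' ∈ Ys, g (Sum.inr y) = Sum.inr y')

/-- A well-behaved containment structure. -/
def WellBehaved (Din : DispGraph V) (Ys : Set Λ) (χ : CStruct V Λ) : Prop :=
  (∀ u v, χ.G.Arc u v → ¬ ∃ y ∈ Ys, ArcRedundant χ y u v) ∧
  (∀ v ∈ χ.G.verts, ¬ ∃ y ∈ Ys, VertRedundant χ y v) ∧
  (∀ u v, χ.G.Arc u v → ∀ y ∈ Ys, ∀ y' ∈ Ys,
    χ.ι u = Sum.inr y → χ.ι v = Sum.inr y' → y = y') ∧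
  (∀ u ∈ χ.G.verts, ∀ v ∈ χ.G.verts, ∀ s t : V, χ.ι u = Sum.inl s → χ.ι v = Sum.inl t →
    Relation.ReflTransGen χ.G.Arc u v → Relation.ReflTransGen Din.Arc s t)

/-- The labels used for signatures and reconciliations. -/
inductive Lab : Type where
  | past | future | left | right
deriving DecidableEq

/-- The restriction function sending every vertex of `P` to the label `y`. -/
noncomputable def sendVerts (P : Set V) (y : Lab) : V ⊕ Lab → V ⊕ Lab
  | Sum.inl v => if v ∈ P then Sum.inr y else Sum.inl v
  | Sum.inr y' => Sum.inr y'

/-- The restriction function sending `A` to label `a` and `B` to label `b`. -/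
noncomputable def sendVerts2 (A : Set V) (a : Lab) (B : Set V) (b : Lab) :
    V ⊕ Lab → V ⊕ Lab
  | Sum.inl v => if v ∈ A then Sum.inr a else if v ∈ B then Sum.inr b else Sum.inl v
  | Sum.inr y => Sum.inr y

/-- The restriction function merging all labels in `A` into the label `y`. -/
noncomputable def sendLabs (A : Set Lab) (y : Lab) : V ⊕ Lab → V ⊕ Lab
  | Sum.inl v => Sum.inl v
  | Sum.inr y' => if y' ∈ A then Sum.inr y else Sum.inr y'

/-- The restriction function sending label `a` to `ya` and label `b` to `yb`. -/
def sendTwoLabs (a ya b yb : Lab) : V ⊕ Lab → V ⊕ Lab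
  | Sum.inl v => Sum.inl v
  | Sum.inr y => if y = a then Sum.inr ya else if y = b then Sum.inr yb else Sum.inr y

/-- `(P,S,F)` is a bag of a tree decomposition of `Din`: a partition of the vertices
with `S` separating `P` from `F`. -/
def IsBag (Din : DispGraph V) (P S F : Set V) : Prop :=
  P ∪ S ∪ F = Din.verts ∧ Disjoint P S ∧ Disjoint P F ∧ Disjoint S F ∧
  ∀ u v, (Din.Arc u v ∨ Din.Arc v u) → u ∈ P → v ∈ F → False

def pfLabs : Set Lab := {Lab.past, Lab.future}
def lrfLabs : Set Lab := {Lab.left, Lab.right, Lab.future}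

/-- A signature for a bag with present `S` is an `(S,{past,future})`-containment structure. -/
def IsSignature (Din : DispGraph V) (S : Set V) (σ : CStruct V Lab) : Prop :=
  IsCS Din S pfLabs σ

/-- An `F`-partial solution for a bag `(P,S,F)` is a `(P∪S,{future})`-containment structure. -/
def IsPartialSolution (Din : DispGraph V) (P S : Set V) (ψ : CStruct V Lab) : Prop :=
  IsCS Din (P ∪ S) ({Lab.future} : Set Lab) ψ

/-- A (well-behaved) signature is valid for the bag `(P,S,F)` if it is the
`(P→past)`-restriction of a well-behaved `F`-partial solution. -/
def ValidSig (Din : DispGraph V) (P S F : Set V) (σ : CStruct V Lab) : Prop :=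
  ∃ ψ : CStruct V Lab, IsPartialSolution Din P S ψ ∧
    WellBehaved Din ({Lab.future} : Set Lab) ψ ∧
    IsRestrictionOf (sendVerts P Lab.past) σ ψ

/-- A reconciliation for a Join bag with present `S` is an
`(S,{left,right,future})`-containment structure. -/
def IsReconciliation (Din : DispGraph V) (S : Set V) (μ : CStruct V Lab) : Prop :=
  IsCS Din S lrfLabs μ

/-- A reconciliation is valid for the Join bag `(L∪R,S,F)` if it is the
`(L→left, R→right)`-restriction of a well-behaved `F`-partial solution. -/
def ValidRecon (Din : DispGraph V) (L R S F : Set V) (μ : CStruct V Lab) : Prop :=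
  ∃ ψ : CStruct V Lab, IsCS Din (L ∪ R ∪ S) ({Lab.future} : Set Lab) ψ ∧
    WellBehaved Din ({Lab.future} : Set Lab) ψ ∧
    IsRestrictionOf (sendVerts2 L Lab.left R Lab.right) μ ψ

/-- `z` is an internal vertex of the replacement path `Pm u v`. -/
def internalOf (Pm : V → V → List V) (u v z : V) : Prop :=
  z ∈ Pm u v ∧ z ≠ u ∧ z ≠ v

/-- `σ₀` is a subdivision of the containment structure `σ`, with each network
arc `uv` of `σ` replaced by the path `Pm u v`. -/
def IsSubdivisionOfCS (σ₀ σ : CStruct V Λ) (Pm : V → V → List V) : Prop :=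
  σ₀.G.VT = σ.G.VT ∧
  (∀ u v, σ₀.G.TArc u v ↔ σ.G.TArc u v) ∧
  σ.G.VN ⊆ σ₀.G.VN ∧
  σ₀.G.verts = σ.G.verts ∪ {z : V | ∃ u v, σ.G.NArc u v ∧ z ∈ Pm u v} ∧
  (∀ u v, σ.G.NArc u v → DipathFrom σ₀.G.NArc u v (Pm u v) ∧ 2 ≤ (Pm u v).length) ∧
  (∀ u v, σ.G.NArc u v → 2 < (Pm u v).length →
    ∃ y : Λ, σ.ι u = Sum.inr y ∧ σ.ι v = Sum.inr y) ∧
  (∀ u v, σ.G.NArc u v → ∀ z, internalOf Pm u v z →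
    z ∉ σ.G.verts ∧ z ∈ σ₀.G.VN ∧ σ₀.ι z = σ.ι u) ∧
  (∀ u v u' v', σ.G.NArc u v → σ.G.NArc u' v' → (u, v) ≠ (u', v') →
    ∀ z, internalOf Pm u v z → ¬ internalOf Pm u' v' z) ∧
  (∀ a b, σ₀.G.NArc a b ↔ ∃ u v, σ.G.NArc u v ∧ IsArcOf (Pm u v) a b) ∧
  (∀ v ∈ σ.G.verts, σ₀.ι v = σ.ι v) ∧
  (∀ v ∈ σ.G.VT, σ₀.emb.vmap v = σ.emb.vmap v) ∧
  (∀ u v, σ.G.TArc u v →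
    (σ₀.emb.pmap u v).head? = (σ.emb.pmap u v).head? ∧
    (σ₀.emb.pmap u v).getLast? = (σ.emb.pmap u v).getLast? ∧
    ∀ a b, IsArcOf (σ₀.emb.pmap u v) a b ↔
      ∃ c d, IsArcOf (σ.emb.pmap u v) c d ∧ IsArcOf (Pm c d) a b)

/-- `χ` has a long `y`-path: a suppressible degree-(1,1) network vertex between two
network arcs, all three vertices labelled `y`, with no tree vertex embedded into it. -/
def LongYPath (χ : CStruct V Λ) (y : Λ) : Prop :=
  ∃ x₁ x₂ x₃ : V, χ.G.NArc x₁ x₂ ∧ χ.G.NArc x₂ x₃ ∧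
    {u : V | χ.G.NArc u x₂}.ncard = 1 ∧ {u : V | χ.G.NArc x₂ u}.ncard = 1 ∧
    χ.ι x₁ = Sum.inr y ∧ χ.ι x₂ = Sum.inr y ∧ χ.ι x₃ = Sum.inr y ∧
    ∀ w ∈ χ.G.VT, χ.emb.vmap w ≠ x₂

def IsCompact (χ : CStruct V Λ) : Prop := ∀ y : Λ, ¬ LongYPath χ y

/-- `σ` is the compact form of `σ₀`: `σ` is compact and `σ₀` is a subdivision of `σ`. -/
def IsCompactFormOf (σ σ₀ : CStruct V Λ) : Prop :=
  IsCompact σ ∧ ∃ Pm : V → V → List V, IsSubdivisionOfCS σ₀ σ Pm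

/-- Isomorphism of containment structures. -/
def CSIso (χ χ' : CStruct V Λ) : Prop :=
  ∃ f : V → V, Set.BijOn f χ.G.verts χ'.G.verts ∧
    (∀ v ∈ χ.G.verts, (v ∈ χ.G.VT ↔ f v ∈ χ'.G.VT)) ∧
    (∀ v ∈ χ.G.verts, (v ∈ χ.G.VN ↔ f v ∈ χ'.G.VN)) ∧
    (∀ u ∈ χ.G.verts, ∀ v ∈ χ.G.verts, (χ.G.Arc u v ↔ χ'.G.Arc (f u) (f v))) ∧
    (∀ v ∈ χ.G.verts, χ'.ι (f v) = χ.ι v) ∧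
    (∀ v ∈ χ.G.VT, χ'.emb.vmap (f v) = f (χ.emb.vmap v)) ∧
    (∀ u v, χ.G.TArc u v → χ'.emb.pmap (f u) (f v) = (χ.emb.pmap u v).map f)

/-! ### Auxiliary lemmas for Statement 8 -/

section Aux

lemma mem_of_head?_eq {p : List V} {u : V} (h : p.head? = some u) : u ∈ p := by
  cases p with
  | nil => simp at h
  | cons a t =>
    simp only [List.head?_cons, Option.some.injEq] at h
    simp [h]

lemma mem_of_getLast?_eq {p : List V} {u : V} (h : p.getLast? = some u) : u ∈ p := by
  rw [List.getLast?_eq_getElem?] at h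
  rcases p with _ | ⟨a, t⟩
  · simp at h
  · have hlt : (a :: t).length - 1 < (a :: t).length := by simp
    rw [List.getElem?_eq_getElem hlt] at h
    have hmem := List.getElem_mem hlt
    have h' : (a :: t)[(a :: t).length - 1] = u := by injection h
    rwa [h'] at hmem

lemma isArcOf_iff_getElem {p : List V} {a b : V} :
    IsArcOf p a b ↔ ∃ i : ℕ, ∃ h : i + 1 < p.length,
      p[i]'(Nat.lt_of_succ_lt h) = a ∧ p[i+1]'h = b := by
  constructor
  · intro h
    rw [IsArcOf, listArcs, List.mem_iff_getElem] at h
    obtain ⟨i, hi, hget⟩ := h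
    have hlen : i + 1 < p.length := by
      rw [List.length_zip, List.length_tail] at hi
      omega
    refine ⟨i, hlen, ?_, ?_⟩
    · have := congrArg Prod.fst hget
      rw [List.getElem_zip] at hget
      exact (congrArg Prod.fst hget : _)
    · rw [List.getElem_zip] at hget
      have := (congrArg Prod.snd hget : p.tail[i]'_ = b)
      rwa [List.getElem_tail] at this
  · rintro ⟨i, h, h1, h2⟩
    rw [IsArcOf, listArcs, List.mem_iff_getElem]
    have hi : i < (p.zip p.tail).length := by
      rw [List.length_zip, List.length_tail]; omega
    refine ⟨i, hi, ?_⟩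
    rw [List.getElem_zip, List.getElem_tail]
    exact Prod.ext h1 h2

lemma chain'_of_arcs {R : V → V → Prop} {p : List V}
    (h : ∀ a b, IsArcOf p a b → R a b) : p.Chain' R := by
  unfold List.Chain'; rw [List.isChain_iff_getElem]
  intro i hi
  apply h
  rw [isArcOf_iff_getElem]
  exact ⟨i, by omega, by simp, by simp⟩

lemma arcs_of_chain' {R : V → V → Prop} {p : List V} (h : p.Chain' R)
    {a b : V} (ha : IsArcOf p a b) : R a b := by
  unfold List.Chain' at h; rw [List.isChain_iff_getElem] at h
  rw [isArcOf_iff_getElem] at ha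
  obtain ⟨i, hi, h1, h2⟩ := ha
  have := h i (by omega)
  rw [h1, h2] at this
  exact this

lemma not_isArcOf_getLast {p : List V} (hnd : p.Nodup) {a b : V}
    (hl : p.getLast? = some a) : ¬ IsArcOf p a b := by
  intro h
  rw [isArcOf_iff_getElem] at h
  obtain ⟨i, hi, h1, _⟩ := h
  rw [List.getLast?_eq_getElem?] at hl
  have hlt : p.length - 1 < p.length := by omega
  rw [List.getElem?_eq_getElem hlt] at hl
  have ha : p[p.length - 1] = a := by injection hl
  have : i = p.length - 1 := (List.Nodup.getElem_inj_iff hnd).mp (h1.trans ha.symm)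
  omega

lemma not_isArcOf_head {p : List V} (hnd : p.Nodup) {a b : V}
    (hh : p.head? = some b) : ¬ IsArcOf p a b := by
  intro h
  rw [isArcOf_iff_getElem] at h
  obtain ⟨i, hi, _, h2⟩ := h
  rw [List.head?_eq_getElem?] at hh
  have hlt : 0 < p.length := by omega
  rw [List.getElem?_eq_getElem hlt] at hh
  have hb : p[0] = b := by injection hh
  have : i + 1 = 0 := (List.Nodup.getElem_inj_iff hnd).mp (h2.trans hb.symm)
  omega

lemma two_le_length_of_dipath {A : V → V → Prop} {u v : V} {p : List V}
    (h : DipathFrom A u v p) (hne : u ≠ v) : 2 ≤ p.length := by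
  obtain ⟨_, _, hh, hl⟩ := h
  match p with
  | [] => simp at hh
  | [a] =>
    simp only [List.head?_cons, Option.some.injEq] at hh
    simp only [List.getLast?_singleton, Option.some.injEq] at hl
    exact absurd (hh ▸ hl ▸ rfl) hne
  | a :: b :: t => simp

lemma exists_arc_of_mem_dipath {A : V → V → Prop} {u v : V} {p : List V}
    (h : DipathFrom A u v p) (hne : u ≠ v) {z : V} (hz : z ∈ p) :
    (∃ a, A z a) ∨ (∃ a, A a z) := by
  have hlen : 2 ≤ p.length := two_le_length_of_dipath h hne
  have hc := h.1
  unfold List.Chain' at hc; rw [List.isChain_iff_getElem] at hc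
  rw [List.mem_iff_getElem] at hz
  obtain ⟨i, hi, hget⟩ := hz
  by_cases hlast : i + 1 < p.length
  · left
    refine ⟨p[i+1], ?_⟩
    have := hc i (by omega)
    rwa [hget] at this
  · right
    have hi1 : 1 ≤ i := by omega
    refine ⟨p[i-1]'(by omega), ?_⟩
    have := hc (i - 1) (by omega)
    have heq : i - 1 + 1 = i := by omega
    simp only [heq] at this
    rwa [hget] at this

lemma head_mem_of_dipath {A : V → V → Prop} {u v : V} {p : List V}
    (h : DipathFrom A u v p) : u ∈ p := mem_of_head?_eq h.2.2.1

lemma last_mem_of_dipath {A : V → V → Prop} {u v : V} {p : List V}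
    (h : DipathFrom A u v p) : v ∈ p := mem_of_getLast?_eq h.2.2.2

lemma listArcs_map (f : V → V) (p : List V) :
    listArcs (p.map f) = (listArcs p).map (Prod.map f f) := by
  unfold listArcs
  rw [← List.map_tail, List.zip_map]

lemma isArcOf_map {f : V → V} {p : List V} {a b : V} :
    IsArcOf (p.map f) a b ↔ ∃ c d, IsArcOf p c d ∧ f c = a ∧ f d = b := by
  unfold IsArcOf
  rw [listArcs_map, List.mem_map]
  constructor
  · rintro ⟨⟨c, d⟩, h, heq⟩
    exact ⟨c, d, h, congrArg Prod.fst heq, congrArg Prod.snd heq⟩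
  · rintro ⟨c, d, h, h1, h2⟩
    exact ⟨(c, d), h, by simp [Prod.map, h1, h2]⟩

lemma DipathFrom.map_f {A B : V → V → Prop} {u v : V} {p : List V} {f : V → V}
    (h : DipathFrom A u v p) (harc : ∀ a b, A a b → B (f a) (f b))
    (hinj : ∀ a ∈ p, ∀ b ∈ p, f a = f b → a = b) :
    DipathFrom B (f u) (f v) (p.map f) := by
  obtain ⟨hc, hnd, hh, hl⟩ := h
  refine ⟨List.isChain_map_of_isChain f harc hc, List.Nodup.map_on hinj hnd, ?_, ?_⟩
  · rw [List.head?_map, hh]; rfl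
  · rw [List.getLast?_map, hl]; rfl

lemma outDeg_eq_zero_iff {G : DGraph V} (hfin : G.verts.Finite) {u : V} :
    G.outDeg u = 0 ↔ ∀ v, ¬ G.Arc u v := by
  have hf : {v | G.Arc u v}.Finite := hfin.subset (fun v hv => G.arc_right hv)
  rw [DGraph.outDeg, Set.ncard_eq_zero hf]
  simp [Set.eq_empty_iff_forall_notMem]

end Aux

section Stmt8Aux

variable {N T : DGraph V} {Din : DispGraph V}

lemma outDeg_pos_arc {G : DGraph V} {u : V} (h : G.outDeg u ≠ 0) : ∃ x, G.Arc u x :=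
  Set.nonempty_of_ncard_ne_zero h

lemma inDeg_pos_arc {G : DGraph V} {u : V} (h : G.inDeg u ≠ 0) : ∃ x, G.Arc x u :=
  Set.nonempty_of_ncard_ne_zero h

lemma shared_no_out_N (hN : IsBinPhyloNet N) (hShared : SharedLeaves N T)
    {u : V} (hu : u ∈ N.verts ∩ T.verts) : ∀ v, ¬ N.Arc u v := by
  have hleaf : u ∈ leaves N := by rw [← hShared.1]; exact hu
  exact (outDeg_eq_zero_iff hN.2.1).mp hleaf.2.2

lemma shared_no_out_T (hT : IsBinPhyloTree T) (hShared : SharedLeaves N T)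
    {u : V} (hu : u ∈ N.verts ∩ T.verts) : ∀ v, ¬ T.Arc u v := by
  have hleaf : u ∈ leaves T := by rw [← hShared.2]; exact hu
  exact (outDeg_eq_zero_iff hT.1.2.1).mp hleaf.2.2

lemma tArc_iff (hN : IsBinPhyloNet N) (hShared : SharedLeaves N T)
    (hVT : Din.VT = T.verts)
    (hArc : ∀ u v, Din.Arc u v ↔ (N.Arc u v ∨ T.Arc u v)) (u v : V) :
    Din.TArc u v ↔ T.Arc u v := by
  constructor
  · rintro ⟨hA, huT, hvT⟩
    rcases (hArc u v).mp hA with h | h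
    · rw [hVT] at huT
      exact absurd h (shared_no_out_N hN hShared ⟨N.arc_left h, huT⟩ v)
    · exact h
  · intro h
    refine ⟨(hArc u v).mpr (Or.inr h), ?_, ?_⟩
    · rw [hVT]; exact T.arc_left h
    · rw [hVT]; exact T.arc_right h

lemma nArc_iff (hT : IsBinPhyloTree T) (hShared : SharedLeaves N T)
    (hVN : Din.VN = N.verts)
    (hArc : ∀ u v, Din.Arc u v ↔ (N.Arc u v ∨ T.Arc u v)) (u v : V) :
    Din.NArc u v ↔ N.Arc u v := by
  constructor
  · rintro ⟨hA, huN, hvN⟩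
    rcases (hArc u v).mp hA with h | h
    · exact h
    · rw [hVN] at huN
      exact absurd h (shared_no_out_T hT hShared ⟨huN, T.arc_left h⟩ v)
  · intro h
    refine ⟨(hArc u v).mpr (Or.inl h), ?_, ?_⟩
    · rw [hVN]; exact N.arc_left h
    · rw [hVN]; exact N.arc_right h

lemma T_vert_cases (hT : IsBinPhyloTree T) (hShared : SharedLeaves N T)
    {u : V} (hu : u ∈ T.verts) :
    (T.outDeg u = 2 ∧ u ∉ N.verts) ∨ u ∈ N.verts ∩ T.verts := by
  by_cases hNu : u ∈ N.verts
  · exact Or.inr ⟨hNu, hu⟩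
  · left
    refine ⟨?_, hNu⟩
    rcases hT.1.2.2.2.2 u hu with h | h | h | h
    · exact h.2
    · have hleaf : u ∈ leaves T := ⟨hu, h.1, h.2⟩
      rw [← hShared.2] at hleaf
      exact absurd hleaf.1 hNu
    · obtain ⟨h1, _⟩ := h
      have h3 := hT.2 u hu
      omega
    · exact h.2

lemma shared_T_outDeg_zero (hT : IsBinPhyloTree T) (hShared : SharedLeaves N T)
    {u : V} (hu : u ∈ N.verts ∩ T.verts) : T.outDeg u = 0 := by
  have hleaf : u ∈ leaves T := by rw [← hShared.2]; exact hu
  exact hleaf.2.2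

lemma T_incident (hT : IsBinPhyloTree T) {u : V} (hu : u ∈ T.verts) :
    ∃ x, T.Arc u x ∨ T.Arc x u := by
  rcases hT.1.2.2.2.2 u hu with h | h | h | h
  · obtain ⟨x, hx⟩ := outDeg_pos_arc (G := T) (u := u) (by rw [h.2]; omega)
    exact ⟨x, Or.inl hx⟩
  · obtain ⟨x, hx⟩ := inDeg_pos_arc (G := T) (u := u) (by rw [h.1]; omega)
    exact ⟨x, Or.inr hx⟩
  · obtain ⟨x, hx⟩ := inDeg_pos_arc (G := T) (u := u) (by rw [h.1]; omega)
    exact ⟨x, Or.inr hx⟩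
  · obtain ⟨x, hx⟩ := outDeg_pos_arc (G := T) (u := u) (by rw [h.2]; omega)
    exact ⟨x, Or.inl hx⟩

lemma din_out_eq (hArc : ∀ u v, Din.Arc u v ↔ (N.Arc u v ∨ T.Arc u v))
    {u : V} (hu : u ∉ N.verts) : {x : V | Din.Arc u x} = {x : V | T.Arc u x} := by
  ext x
  simp only [Set.mem_setOf_eq, hArc]
  constructor
  · rintro (h | h)
    · exact absurd (N.arc_left h) hu
    · exact h
  · exact Or.inr

lemma din_outDeg_eq_T (hArc : ∀ u v, Din.Arc u v ↔ (N.Arc u v ∨ T.Arc u v))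
    {u : V} (hu : u ∉ N.verts) : Din.outDeg u = T.outDeg u := by
  show {x : V | Din.Arc u x}.ncard = {x : V | T.Arc u x}.ncard
  rw [din_out_eq hArc hu]

lemma T_acyc_ne (hT : IsBinPhyloTree T) {u v : V} (h : T.Arc u v) : u ≠ v := by
  intro heq
  exact hT.1.1 u (Relation.TransGen.single (heq ▸ h))

end Stmt8Aux

section Stmt8Main

variable {N T : DGraph V} {Din : DispGraph V}

lemma displays_of_embFun (hN : IsBinPhyloNet N) (hT : IsBinPhyloTree T)
    (hShared : SharedLeaves N T)
    (hVN : Din.VN = N.verts) (hVT : Din.VT = T.verts)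
    (hArc : ∀ u v, Din.Arc u v ↔ (N.Arc u v ∨ T.Arc u v))
    (φ : EmbFun Din) : Displays N T := by
  have hS1 := tArc_iff hN hShared hVT hArc
  have hS2 := nArc_iff hT hShared hVN hArc
  have hpath : ∀ {u v : V}, T.Arc u v →
      DipathFrom Din.netSide.Arc (φ.vmap u) (φ.vmap v) (φ.pmap u v) :=
    fun h => φ.path_spec ((hS1 _ _).mpr h)
  have hvne : ∀ {u v : V}, T.Arc u v → φ.vmap u ≠ φ.vmap v := by
    intro u v h heq
    have hu : u ∈ Din.VT := by rw [hVT]; exact T.arc_left h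
    have hv : v ∈ Din.VT := by rw [hVT]; exact T.arc_right h
    exact T_acyc_ne hT h (φ.inj u hu v hv heq)
  have hmemN : ∀ {u v : V}, T.Arc u v → ∀ z ∈ φ.pmap u v, z ∈ N.verts := by
    intro u v h z hz
    rcases exists_arc_of_mem_dipath (hpath h) (hvne h) hz with ⟨a, ha⟩ | ⟨a, ha⟩
    · rw [← hVN]; exact ha.2.1
    · rw [← hVN]; exact ha.2.2
  refine ⟨⟨{z : V | ∃ u v, T.Arc u v ∧ z ∈ φ.pmap u v},
      fun a b => ∃ u v, T.Arc u v ∧ IsArcOf (φ.pmap u v) a b,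
      ?_, ?_⟩, ⟨?_, ?_⟩, ?_⟩
  · rintro a b ⟨u, v, huv, harc⟩
    exact ⟨u, v, huv, isArcOf_mem_left harc⟩
  · rintro a b ⟨u, v, huv, harc⟩
    exact ⟨u, v, huv, isArcOf_mem_right harc⟩
  · rintro z ⟨u, v, huv, hz⟩
    exact hmemN huv z hz
  · rintro a b ⟨u, v, huv, harc⟩
    have := arcs_of_chain' ((hpath huv).1.imp fun a b hab => (hS2 a b).mp hab) harc
    exact this
  · refine ⟨⟨φ.vmap, φ.pmap, ?_, ?_, ?_, ?_, ?_, ?_, ?_, ?_⟩, ?_⟩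
    · -- vmap_mem
      intro u hu
      obtain ⟨x, hx | hx⟩ := T_incident hT hu
      · exact ⟨u, x, hx, head_mem_of_dipath (hpath hx)⟩
      · exact ⟨x, u, hx, last_mem_of_dipath (hpath hx)⟩
    · -- inj
      intro u hu v hv heq
      have hu' : u ∈ Din.VT := by rw [hVT]; exact hu
      have hv' : v ∈ Din.VT := by rw [hVT]; exact hv
      exact φ.inj u hu' v hv' heq
    · -- path_spec
      intro u v h
      obtain ⟨hc, hnd, hh, hl⟩ := hpath h
      exact ⟨chain'_of_arcs (fun a b hab => ⟨u, v, h, hab⟩), hnd, hh, hl⟩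
    · -- path_len
      intro u v h
      exact two_le_length_of_dipath (hpath h) (hvne h)
    · -- internal_new
      intro u v h z hz hzu hzv w hw heq
      by_cases hwu : w = u
      · exact hzu (by rw [← heq, hwu])
      by_cases hwv : w = v
      · exact hzv (by rw [← heq, hwv])
      obtain ⟨x, hx | hx⟩ := T_incident hT hw
      · have hne2 : (w, x) ≠ (u, v) := by
          intro hp; exact hwu (congrArg Prod.fst hp)
        have hzm : z ∈ φ.pmap w x := by
          rw [← heq]; exact head_mem_of_dipath (hpath hx)
        obtain ⟨t, ht1, ht2, ht3⟩ := φ.share ((hS1 _ _).mpr hx) ((hS1 _ _).mpr h)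
          hne2 z hzm hz
        rcases ht2 with rfl | rfl
        · exact hzu ht3.symm
        · exact hzv ht3.symm
      · have hne2 : (x, w) ≠ (u, v) := by
          intro hp; exact hwv (congrArg Prod.snd hp)
        have hzm : z ∈ φ.pmap x w := by
          rw [← heq]; exact last_mem_of_dipath (hpath hx)
        obtain ⟨t, ht1, ht2, ht3⟩ := φ.share ((hS1 _ _).mpr hx) ((hS1 _ _).mpr h)
          hne2 z hzm hz
        rcases ht2 with rfl | rfl
        · exact hzu ht3.symm
        · exact hzv ht3.symm
    · -- internal_disjoint
      intro u v u' v' h h' hne z hz hz'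
      obtain ⟨t, ht1, ht2, ht3⟩ := φ.share ((hS1 _ _).mpr h) ((hS1 _ _).mpr h')
        hne z hz hz'
      constructor
      · rcases ht1 with rfl | rfl
        · exact Or.inl ht3.symm
        · exact Or.inr ht3.symm
      · rcases ht2 with rfl | rfl
        · exact Or.inl ht3.symm
        · exact Or.inr ht3.symm
    · -- arcs_cover
      exact fun a b h => h
    · -- verts_cover
      exact fun z hz => Or.inr hz
    · -- fixes
      intro u hu
      have h1 : u ∈ Din.VT := by rw [hVT]; exact hu.1
      have h2 : u ∈ Din.VN := by rw [hVN]; exact hu.2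
      exact φ.fixes u ⟨h1, h2⟩

def embFun_of_displays (hN : IsBinPhyloNet N) (hT : IsBinPhyloTree T)
    (hShared : SharedLeaves N T)
    (hVN : Din.VN = N.verts) (hVT : Din.VT = T.verts)
    (hArc : ∀ u v, Din.Arc u v ↔ (N.Arc u v ∨ T.Arc u v))
    {H : DGraph V} (hsub : IsSubgraph H N) (w : SubdivWitness H T)
    (hfix : ∀ u ∈ T.verts ∩ N.verts, w.vmap u = u) : EmbFun Din where
  vmap := w.vmap
  pmap := w.pmap
  vmap_mem := by
    intro u hu
    have hu' : u ∈ T.verts := by rw [← hVT]; exact hu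
    show w.vmap u ∈ Din.VN
    rw [hVN]
    exact hsub.1 (w.vmap_mem u hu')
  path_spec := by
    intro u v h
    have h' : T.Arc u v := (tArc_iff hN hShared hVT hArc u v).mp h
    obtain ⟨hc, hnd, hh, hl⟩ := w.path_spec h'
    refine ⟨hc.imp fun a b hab => ?_, hnd, hh, hl⟩
    exact (nArc_iff hT hShared hVN hArc a b).mpr (hsub.2 hab)
  inj := by
    intro u hu v hv heq
    have hu' : u ∈ T.verts := by rw [← hVT]; exact hu
    have hv' : v ∈ T.verts := by rw [← hVT]; exact hv
    exact w.inj u hu' v hv' heq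
  fixes := by
    intro u hu
    exact hfix u ⟨by rw [← hVT]; exact hu.1, by rw [← hVN]; exact hu.2⟩
  arc_disjoint := by
    intro u v u' v' h h' hne e he he'
    have hT1 : T.Arc u v := (tArc_iff hN hShared hVT hArc u v).mp h
    have hT2 : T.Arc u' v' := (tArc_iff hN hShared hVT hArc u' v').mp h'
    obtain ⟨a, b⟩ := e
    have he1 : IsArcOf (w.pmap u v) a b := he
    have he2 : IsArcOf (w.pmap u' v') a b := he'
    have hp1 := w.path_spec hT1
    have hp2 := w.path_spec hT2
    have hid1 := w.internal_disjoint hT1 hT2 hne a (isArcOf_mem_left he1)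
      (isArcOf_mem_left he2)
    have hid2 := w.internal_disjoint hT1 hT2 hne b (isArcOf_mem_right he1)
      (isArcOf_mem_right he2)
    have ha1 : a = w.vmap u := by
      rcases hid1.1 with h1 | h1
      · exact h1
      · exact absurd he1 (h1 ▸ not_isArcOf_getLast hp1.2.1 hp1.2.2.2)
    have ha2 : a = w.vmap u' := by
      rcases hid1.2 with h1 | h1
      · exact h1
      · exact absurd he2 (h1 ▸ not_isArcOf_getLast hp2.2.1 hp2.2.2.2)
    have hb1 : b = w.vmap v := by
      rcases hid2.1 with h1 | h1
      · exact absurd he1 (h1 ▸ not_isArcOf_head hp1.2.1 hp1.2.2.1)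
      · exact h1
    have hb2 : b = w.vmap v' := by
      rcases hid2.2 with h1 | h1
      · exact absurd he2 (h1 ▸ not_isArcOf_head hp2.2.1 hp2.2.2.1)
      · exact h1
    apply hne
    have huu : u = u' := w.inj u (T.arc_left hT1) u' (T.arc_left hT2)
      (ha1.symm.trans ha2)
    have hvv : v = v' := w.inj v (T.arc_right hT1) v' (T.arc_right hT2)
      (hb1.symm.trans hb2)
    rw [huu, hvv]
  share := by
    intro u v u' v' h h' hne z hz hz'
    have hT1 : T.Arc u v := (tArc_iff hN hShared hVT hArc u v).mp h
    have hT2 : T.Arc u' v' := (tArc_iff hN hShared hVT hArc u' v').mp h'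
    have hid := w.internal_disjoint hT1 hT2 hne z hz hz'
    rcases hid.1 with h1 | h1 <;> rcases hid.2 with h2 | h2
    · exact ⟨u, Or.inl rfl, Or.inl (w.inj u (T.arc_left hT1) u' (T.arc_left hT2)
        (h1.symm.trans h2)), h1.symm⟩
    · exact ⟨u, Or.inl rfl, Or.inr (w.inj u (T.arc_left hT1) v' (T.arc_right hT2)
        (h1.symm.trans h2)), h1.symm⟩
    · exact ⟨v, Or.inr rfl, Or.inl (w.inj v (T.arc_right hT1) u' (T.arc_left hT2)
        (h1.symm.trans h2)), h1.symm⟩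
    · exact ⟨v, Or.inr rfl, Or.inr (w.inj v (T.arc_right hT1) v' (T.arc_right hT2)
        (h1.symm.trans h2)), h1.symm⟩

end Stmt8Main



/-- `(N_in, T_in)` is a Yes-instance of Tree Containment iff there is a
`(V(D_in),Y)`-containment structure whose isolabelling maps no vertex into `Y`. -/
theorem yes_iff_containmentStructure {V Λ : Type} (Ys : Set Λ) (N T : DGraph V)
    (hN : IsBinPhyloNet N) (hT : IsBinPhyloTree T) (hShared : SharedLeaves N T)
    (Din : DispGraph V)
    (hVN : Din.VN = N.verts) (hVT : Din.VT = T.verts)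
    (hArc : ∀ u v, Din.Arc u v ↔ (N.Arc u v ∨ T.Arc u v)) :
    Displays N T ↔
      ∃ χ : CStruct V Λ, IsCS Din Din.verts Ys χ ∧
        ∀ v ∈ χ.G.verts, ∀ y : Λ, χ.ι v ≠ Sum.inr y := by
  constructor
  · -- forward: Displays → containment structure
    rintro ⟨H, hsub, w, hfix⟩
    let ψ : EmbFun Din := embFun_of_displays hN hT hShared hVN hVT hArc hsub w hfix
    refine ⟨⟨Din, ψ, Sum.inl⟩, ⟨⟨?_, ?_, ?_, ?_, ?_⟩, ?_, ?_⟩, ?_⟩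
    · exact fun u hu => Or.inl ⟨u, hu, rfl⟩
    · exact fun s hs => ⟨s, hs, rfl⟩
    · intro u _ s _ heq
      injection heq with h
      subst h
      exact ⟨fun h => h, fun h => h⟩
    · intro u _ v _ s _ h1 h2
      injection h1 with h1
      injection h2 with h2
      rw [h1, h2]
    · intro u _ v _ s _ t _ h1 h2
      injection h1 with h1
      injection h2 with h2
      subst h1; subst h2
      exact Iff.rfl
    · intro u _ s _ heq
      injection heq with h
      subst h
      exact ⟨rfl, rfl⟩
    · intro u hu hne
      have hne' : ψ.vmap u ≠ u := by
        intro h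
        exact hne (by rw [h])
      have huT : u ∈ T.verts := by rw [← hVT]; exact hu
      rcases T_vert_cases hT hShared huT with ⟨h2, hnN⟩ | hsh
      · show Din.outDeg u = 2
        rw [din_outDeg_eq_T hArc hnN]
        exact h2
      · have h1 : u ∈ Din.VT := hu
        have h2 : u ∈ Din.VN := by rw [hVN]; exact hsh.1
        exact absurd (ψ.fixes u ⟨h1, h2⟩) hne'
    · intro v _ y h
      exact Sum.inl_ne_inr h
  · -- backward: containment structure → Displays
    rintro ⟨χ, ⟨⟨c1, c2, c3, c4, c5⟩, hdeg, -⟩, hnoY⟩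
    classical
    have hc : ∀ u ∈ χ.G.verts, ∃ s, s ∈ Din.verts ∧ χ.ι u = Sum.inl s := by
      intro u hu
      rcases c1 u hu with ⟨s, hs, h⟩ | ⟨y, _, h⟩
      · exact ⟨s, hs, h⟩
      · exact absurd h (hnoY u hu y)
    choose! f hf1 hf2 using hc
    have hc' : ∀ s ∈ Din.verts, ∃ u, u ∈ χ.G.verts ∧ χ.ι u = Sum.inl s := by
      intro s hs
      obtain ⟨u, hu, h⟩ := c2 s hs
      exact ⟨u, hu, h⟩
    choose! finv hg1 hg2 using hc'
    have hinjf : ∀ u ∈ χ.G.verts, ∀ v ∈ χ.G.verts, f u = f v → u = v := by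
      intro u hu v hv h
      exact c4 u hu v hv (f u) (hf1 u hu) (hf2 u hu) (by rw [h]; exact hf2 v hv)
    have hfinvf : ∀ u ∈ χ.G.verts, finv (f u) = u := by
      intro u hu
      exact c4 _ (hg1 _ (hf1 u hu)) u hu (f u) (hf1 u hu) (hg2 _ (hf1 u hu)) (hf2 u hu)
    have hffinv : ∀ s ∈ Din.verts, f (finv s) = s := by
      intro s hs
      have h2 := hf2 (finv s) (hg1 s hs)
      have h3 := (h2.symm.trans (hg2 s hs))
      exact Sum.inl.inj h3
    have hVTsub : Din.VT ⊆ Din.verts := by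
      rw [← Din.union_eq]; exact Set.subset_union_left
    have hVNsub : Din.VN ⊆ Din.verts := by
      rw [← Din.union_eq]; exact Set.subset_union_right
    have hGVT : χ.G.VT ⊆ χ.G.verts := by
      rw [← χ.G.union_eq]; exact Set.subset_union_left
    have hGVN : χ.G.VN ⊆ χ.G.verts := by
      rw [← χ.G.union_eq]; exact Set.subset_union_right
    have hsideT : ∀ s ∈ Din.VT, finv s ∈ χ.G.VT := fun s hs =>
      (c3 (finv s) (hg1 s (hVTsub hs)) s (hVTsub hs) (hg2 s (hVTsub hs))).2 hs
    have hsideN : ∀ s ∈ Din.VN, finv s ∈ χ.G.VN := fun s hs =>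
      (c3 (finv s) (hg1 s (hVNsub hs)) s (hVNsub hs) (hg2 s (hVNsub hs))).1 hs
    have hfN : ∀ u ∈ χ.G.verts, u ∈ χ.G.VN → f u ∈ Din.VN := by
      intro u hu huN
      by_contra hnot
      have hfT : f u ∈ Din.VT := by
        have hm := hf1 u hu
        rw [← Din.union_eq] at hm
        rcases hm with h | h
        · exact h
        · exact absurd h hnot
      have huT : u ∈ χ.G.VT := (c3 u hu (f u) (hf1 u hu) (hf2 u hu)).2 hfT
      have hout0 : χ.G.outDeg u = 0 := by
        have hempty : {x : V | χ.G.Arc u x} = ∅ := by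
          ext x
          simp only [Set.mem_setOf_eq, Set.mem_empty_iff_false, iff_false]
          exact χ.G.shared_out u ⟨huT, huN⟩ x
        show {x : V | χ.G.Arc u x}.ncard = 0
        rw [hempty]
        simp
      have hdeq := (hdeg u hu (f u) (hf1 u hu) (hf2 u hu)).2
      have hDout : Din.outDeg (f u) = 0 := by rw [← hdeq]; exact hout0
      have hfuT : f u ∈ T.verts := by rw [← hVT]; exact hfT
      have hfuN : f u ∉ N.verts := by rw [← hVN]; exact hnot
      rcases T_vert_cases hT hShared hfuT with ⟨h2, _⟩ | hsh
      · rw [din_outDeg_eq_T hArc hfuN, h2] at hDout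
        omega
      · exact hfuN hsh.1
    have hArcf : ∀ u ∈ χ.G.verts, ∀ v ∈ χ.G.verts,
        (χ.G.Arc u v ↔ Din.Arc (f u) (f v)) := fun u hu v hv =>
      c5 u hu v hv (f u) (hf1 u hu) (f v) (hf1 v hv) (hf2 u hu) (hf2 v hv)
    have htdown : ∀ {s t : V}, Din.TArc s t → χ.G.TArc (finv s) (finv t) := by
      intro s t h
      obtain ⟨hA, hsT, htT⟩ := h
      refine ⟨?_, hsideT s hsT, hsideT t htT⟩
      apply (hArcf _ (hGVT (hsideT s hsT)) _ (hGVT (hsideT t htT))).mpr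
      rw [hffinv s (hVTsub hsT), hffinv t (hVTsub htT)]
      exact hA
    have hpmem : ∀ {s t : V}, Din.TArc s t →
        ∀ z ∈ χ.emb.pmap (finv s) (finv t), z ∈ χ.G.VN := by
      intro s t h z hz
      have h' := htdown h
      have hp := χ.emb.path_spec h'
      have hne : χ.emb.vmap (finv s) ≠ χ.emb.vmap (finv t) := by
        intro heq
        have h1 := χ.emb.inj (finv s) h'.2.1 (finv t) h'.2.2 heq
        have hst : s = t := by
          rw [← hffinv s (hVTsub h.2.1), ← hffinv t (hVTsub h.2.2), h1]
        cases hst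
        exact Din.acyclic s (Relation.TransGen.single h.1)
      rcases exists_arc_of_mem_dipath hp hne hz with ⟨a, ha⟩ | ⟨a, ha⟩
      · exact ha.2.1
      · exact ha.2.2
    have harcmap : ∀ a b, χ.G.netSide.Arc a b → Din.netSide.Arc (f a) (f b) := by
      rintro a b ⟨hA, haN, hbN⟩
      exact ⟨(hArcf a (hGVN haN) b (hGVN hbN)).mp hA,
        hfN a (hGVN haN) haN, hfN b (hGVN hbN) hbN⟩
    have hfinveq : ∀ {s t s' t' : V}, Din.TArc s t → Din.TArc s' t' →
        (s, t) ≠ (s', t') → (finv s, finv t) ≠ (finv s', finv t') := by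
      intro s t s' t' h h' hne hp
      apply hne
      injection hp with h1 h2
      have e1 : s = s' := by
        rw [← hffinv s (hVTsub h.2.1), ← hffinv s' (hVTsub h'.2.1), h1]
      have e2 : t = t' := by
        rw [← hffinv t (hVTsub h.2.2), ← hffinv t' (hVTsub h'.2.2), h2]
      rw [e1, e2]
    refine displays_of_embFun hN hT hShared hVN hVT hArc
      ⟨fun s => f (χ.emb.vmap (finv s)),
       fun s t => (χ.emb.pmap (finv s) (finv t)).map f,
       ?_, ?_, ?_, ?_, ?_, ?_⟩
    · -- vmap_mem
      intro s hs
      exact hfN _ (hGVN (χ.emb.vmap_mem (finv s) (hsideT s hs)))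
        (χ.emb.vmap_mem (finv s) (hsideT s hs))
    · -- path_spec
      intro s t h
      exact DipathFrom.map_f (χ.emb.path_spec (htdown h)) harcmap
        (fun a ha b hb heq =>
          hinjf a (hGVN (hpmem h a ha)) b (hGVN (hpmem h b hb)) heq)
    · -- inj
      intro s hs t ht heq
      have h1 : χ.emb.vmap (finv s) = χ.emb.vmap (finv t) :=
        hinjf _ (hGVN (χ.emb.vmap_mem _ (hsideT s hs)))
          _ (hGVN (χ.emb.vmap_mem _ (hsideT t ht))) heq
      have h2 : finv s = finv t := χ.emb.inj _ (hsideT s hs) _ (hsideT t ht) h1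
      rw [← hffinv s (hVTsub hs), ← hffinv t (hVTsub ht), h2]
    · -- fixes
      intro s hs
      have h1 := χ.emb.fixes (finv s) ⟨hsideT s hs.1, hsideN s hs.2⟩
      show f (χ.emb.vmap (finv s)) = s
      rw [h1]
      exact hffinv s (hVTsub hs.1)
    · -- arc_disjoint
      intro s t s' t' h h' hne e he he'
      obtain ⟨a, b⟩ := e
      have he1 : IsArcOf ((χ.emb.pmap (finv s) (finv t)).map f) a b := he
      have he2 : IsArcOf ((χ.emb.pmap (finv s') (finv t')).map f) a b := he'
      rw [isArcOf_map] at he1 he2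
      obtain ⟨c, d, hcd, hca, hdb⟩ := he1
      obtain ⟨c', d', hcd', hca', hdb'⟩ := he2
      have ec : c = c' := hinjf c (hGVN (hpmem h c (isArcOf_mem_left hcd)))
        c' (hGVN (hpmem h' c' (isArcOf_mem_left hcd'))) (hca.trans hca'.symm)
      have ed : d = d' := hinjf d (hGVN (hpmem h d (isArcOf_mem_right hcd)))
        d' (hGVN (hpmem h' d' (isArcOf_mem_right hcd'))) (hdb.trans hdb'.symm)
      have hcd2 : IsArcOf (χ.emb.pmap (finv s') (finv t')) c d := by
        rw [ec, ed]
        exact hcd'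
      exact χ.emb.arc_disjoint (htdown h) (htdown h') (hfinveq h h' hne)
        (c, d) hcd hcd2
    · -- share
      intro s t s' t' h h' hne z hz hz'
      rw [List.mem_map] at hz hz'
      obtain ⟨a, ha, hfa⟩ := hz
      obtain ⟨a', ha', hfa'⟩ := hz'
      have ea : a = a' := hinjf a (hGVN (hpmem h a ha))
        a' (hGVN (hpmem h' a' ha')) (hfa.trans hfa'.symm)
      cases ea
      obtain ⟨t0, ht1, ht2, ht3⟩ := χ.emb.share (htdown h) (htdown h')
        (hfinveq h h' hne) a ha ha'
      have ht0T : t0 ∈ χ.G.VT := by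
        rcases ht1 with rfl | rfl
        · exact hsideT s h.2.1
        · exact hsideT t h.2.2
      refine ⟨f t0, ?_, ?_, ?_⟩
      · rcases ht1 with rfl | rfl
        · exact Or.inl (hffinv s (hVTsub h.2.1))
        · exact Or.inr (hffinv t (hVTsub h.2.2))
      · rcases ht2 with rfl | rfl
        · exact Or.inl (hffinv s' (hVTsub h'.2.1))
        · exact Or.inr (hffinv t' (hVTsub h'.2.2))
      · show f (χ.emb.vmap (finv (f t0))) = z
        rw [hfinvf t0 (hGVT ht0T), ht3]
        exact hfa


end TreeContainment
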